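/- Fix an integer B ≥ 1. Then ∫_{τ²}^∞ (√x − τ) x^{B/2−1} e^{−x/2} dx ∼ 2 e^{−τ²/2} τ^{B−3} as τ → ∞, i.e., lim_{τ→∞} e^{τ²/2} τ^{3−B} ∫_{τ²}^∞ (√x − τ) x^{B/2−1} e^{−x/2} dx = 2. -/

import Mathlib

/-!
Substituting `x = (τ + v / τ) ^ 2` turns the integral into
`2 τ ^ (s - 3) e ^ (-τ² / 2) ∫₀^∞ v (1 + ε v) ^ (s - 1) e ^ (-(v + ε v² / 2)) dv` with `ε = τ⁻²`.
As `ε → 0⁺` the last integral tends to `∫₀^∞ v e ^ (-v) dv = Γ(2) = 1` by dominated convergence: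
`(1 + ε v) ^ (s - 1) ≤ e ^ (|s - 1| ε v)`, so for small `ε` the integrand is at most `v e ^ (-v / 2)`.
-/

open MeasureTheory Real Set Filter Topology

noncomputable def tailKernel (s ε v : ℝ) : ℝ :=
  v * (1 + ε * v) ^ (s - 1) * exp (-(v + ε * v ^ 2 / 2))

lemma one_add_rpow_le_exp_abs_mul {x : ℝ} (hx : 0 ≤ x) (a : ℝ) :
    (1 + x) ^ a ≤ exp (|a| * x) :=
  calc (1 + x) ^ a ≤ (1 + x) ^ |a| := rpow_le_rpow_of_exponent_le (by linarith) (le_abs_self a)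
    _ ≤ exp x ^ |a| := by
        gcongr
        linarith [add_one_le_exp x]
    _ = exp (|a| * x) := by rw [← exp_mul, mul_comm]

lemma tailKernel_nonneg (s : ℝ) {ε v : ℝ} (hε : 0 ≤ ε) (hv : 0 ≤ v) : 0 ≤ tailKernel s ε v := by
  unfold tailKernel
  positivity

lemma tailKernel_le {s ε v : ℝ} (hε : 0 ≤ ε) (hεs : ε * |s - 1| ≤ 1 / 2) (hv : 0 ≤ v) :
    tailKernel s ε v ≤ v * exp (-(1 / 2) * v) := by
  have hexp : exp (|s - 1| * (ε * v)) * exp (-(v + ε * v ^ 2 / 2)) ≤ exp (-(1 / 2) * v) := by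
    rw [← exp_add]
    gcongr
    nlinarith [mul_nonneg hε (sq_nonneg v), mul_le_mul_of_nonneg_right hεs hv]
  calc tailKernel s ε v
      ≤ v * exp (|s - 1| * (ε * v)) * exp (-(v + ε * v ^ 2 / 2)) := by
        unfold tailKernel
        gcongr
        exact one_add_rpow_le_exp_abs_mul (mul_nonneg hε hv) (s - 1)
    _ ≤ v * exp (-(1 / 2) * v) := by
        rw [mul_assoc]
        exact mul_le_mul_of_nonneg_left hexp hv

lemma integral_tailKernel_zero (s : ℝ) : ∫ v in Ioi (0 : ℝ), tailKernel s 0 v = 1 := by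
  rw [← Gamma_two, Gamma_eq_integral two_pos]
  refine setIntegral_congr_fun measurableSet_Ioi fun v _ => ?_
  norm_num [tailKernel, mul_comm]

lemma tendsto_integral_tailKernel (s : ℝ) :
    Tendsto (fun ε => ∫ v in Ioi (0 : ℝ), tailKernel s ε v) (𝓝[>] 0) (𝓝 1) := by
  rw [← integral_tailKernel_zero s]
  have hsmall : ∀ᶠ ε in 𝓝[>] (0 : ℝ), 0 < ε ∧ ε * |s - 1| ≤ 1 / 2 := by
    have hc : Continuous fun ε : ℝ => ε * |s - 1| := by fun_prop
    have hnear : ∀ᶠ ε in 𝓝 (0 : ℝ), ε * |s - 1| < 1 / 2 :=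
      (hc.tendsto 0).eventually (eventually_lt_nhds (by norm_num))
    filter_upwards [self_mem_nhdsWithin, nhdsWithin_le_nhds hnear] with ε hε hεs
    exact ⟨hε, hεs.le⟩
  have hbound : IntegrableOn (fun v : ℝ => v * exp (-(1 / 2) * v)) (Ioi 0) := by
    simpa using integrableOn_rpow_mul_exp_neg_mul_rpow (s := 1) (p := 1) (b := 1 / 2)
      (by norm_num) one_pos (by norm_num)
  refine tendsto_integral_filter_of_dominated_convergence _ ?_ ?_ hbound ?_
  · exact Eventually.of_forall fun ε => by unfold tailKernel; fun_prop
  · filter_upwards [hsmall] with ε ⟨hε, hεs⟩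
    refine (ae_restrict_iff' measurableSet_Ioi).mpr (ae_of_all _ fun v (hv : 0 < v) => ?_)
    rw [norm_of_nonneg (tailKernel_nonneg s hε.le hv.le)]
    exact tailKernel_le hε.le hεs hv.le
  · refine ae_of_all _ fun v => ContinuousAt.tendsto ?_ |>.mono_left nhdsWithin_le_nhds
    unfold tailKernel
    fun_prop (disch := simp)

lemma image_add_div_sq_Ioi {τ : ℝ} (hτ : 0 < τ) :
    (fun v => (τ + v / τ) ^ 2) '' Ioi 0 = Ioi (τ ^ 2) := by
  ext x
  constructor
  · rintro ⟨v, hv : 0 < v, rfl⟩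
    have : τ < τ + v / τ := lt_add_of_pos_right τ (div_pos hv hτ)
    exact pow_lt_pow_left₀ this hτ.le two_ne_zero
  · intro (hx : τ ^ 2 < x)
    have hτx : τ < √x := lt_sqrt_of_sq_lt hx
    refine ⟨τ * (√x - τ), mul_pos hτ (sub_pos.2 hτx), ?_⟩
    show (τ + τ * (√x - τ) / τ) ^ 2 = x
    rw [mul_div_cancel_left₀ _ hτ.ne', add_sub_cancel, sq_sqrt (by nlinarith)]

lemma integral_Ioi_sq_eq_integral_Ioi_add_div {τ : ℝ} (hτ : 0 < τ) (g : ℝ → ℝ) :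
    ∫ x in Ioi (τ ^ 2), g x = ∫ v in Ioi 0, 2 * (τ + v / τ) / τ * g ((τ + v / τ) ^ 2) := by
  have hderiv (v : ℝ) : HasDerivAt (fun v => (τ + v / τ) ^ 2) (2 * (τ + v / τ) / τ) v := by
    refine (((hasDerivAt_id' v).div_const τ).const_add τ).fun_pow 2 |>.congr_deriv ?_
    push_cast
    ring
  have hmono : StrictMonoOn (fun v => (τ + v / τ) ^ 2) (Ioi 0) := by
    intro v (hv : 0 < v) w _ hvw
    have : 0 ≤ τ + v / τ := by positivity
    dsimp only
    gcongr
  rw [← image_add_div_sq_Ioi hτ, integral_image_eq_integral_abs_deriv_smul measurableSet_Ioi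
    (fun v _ => (hderiv v).hasDerivWithinAt) hmono.injOn]
  refine setIntegral_congr_fun measurableSet_Ioi fun v (hv : 0 < v) => ?_
  rw [abs_of_pos (by positivity), smul_eq_mul]

lemma substituted_integrand_eq_tailKernel (s : ℝ) {τ v : ℝ} (hτ : 0 < τ) (hv : 0 ≤ v) :
    2 * (τ + v / τ) / τ *
        ((√((τ + v / τ) ^ 2) - τ) * ((τ + v / τ) ^ 2) ^ (s / 2 - 1) * exp (-(τ + v / τ) ^ 2 / 2))
      = 2 * τ ^ (s - 3) * exp (-τ ^ 2 / 2) * tailKernel s (τ ^ 2)⁻¹ v := by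
  set ε := (τ ^ 2)⁻¹ with hε
  have hw : τ + v / τ = τ * (1 + ε * v) := by rw [hε]; field_simp
  have hpos : 0 < 1 + ε * v := by positivity
  have hwpos : 0 < τ * (1 + ε * v) := by positivity
  have hpow : ((τ * (1 + ε * v)) ^ 2) ^ (s / 2 - 1)
      = (τ * (1 + ε * v)) ^ (s - 1) / (τ * (1 + ε * v)) := by
    rw [← rpow_natCast, ← rpow_mul hwpos.le, ← rpow_sub_one hwpos.ne']
    congr 1
    push_cast
    ring
  have hexp : -(τ * (1 + ε * v)) ^ 2 / 2 = -τ ^ 2 / 2 + -(v + ε * v ^ 2 / 2) := by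
    rw [hε]
    field_simp
    ring
  have hτpow : τ ^ (s - 1) = τ ^ (s - 3) * τ ^ 2 := by
    rw [← rpow_natCast, ← rpow_add hτ]
    ring_nf
  rw [hw, sqrt_sq hwpos.le, hpow, hexp, exp_add, mul_rpow hτ.le hpos.le, hτpow, tailKernel, hε]
  field_simp
  ring

theorem tendsto_exp_mul_rpow_mul_integral_Ioi_sq (s : ℝ) :
    Tendsto
      (fun τ : ℝ => exp (τ ^ 2 / 2) * τ ^ (3 - s) *
        ∫ x in Ioi (τ ^ 2), (√x - τ) * x ^ (s / 2 - 1) * exp (-x / 2))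
      atTop (𝓝 2) := by
  have hε : Tendsto (fun τ : ℝ => (τ ^ 2)⁻¹) atTop (𝓝[>] 0) :=
    tendsto_inv_atTop_nhdsGT_zero.comp (tendsto_pow_atTop two_ne_zero)
  have hlim := ((tendsto_integral_tailKernel s).comp hε).const_mul 2
  rw [mul_one] at hlim
  refine hlim.congr' ?_
  filter_upwards [eventually_gt_atTop 0] with τ hτ
  have hrpow : τ ^ (3 - s) * τ ^ (s - 3) = 1 := by
    rw [← rpow_add hτ, sub_add_sub_cancel', sub_self, rpow_zero]
  have hexp : exp (τ ^ 2 / 2) * exp (-τ ^ 2 / 2) = 1 := by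
    rw [← exp_add, neg_div, add_neg_cancel, exp_zero]
  have hcancel : exp (τ ^ 2 / 2) * τ ^ (3 - s) * (2 * τ ^ (s - 3) * exp (-τ ^ 2 / 2)) = 2 := by
    linear_combination 2 * τ ^ (3 - s) * τ ^ (s - 3) * hexp + 2 * hrpow
  rw [integral_Ioi_sq_eq_integral_Ioi_add_div hτ, setIntegral_congr_fun measurableSet_Ioi
    fun v hv => substituted_integrand_eq_tailKernel s hτ (le_of_lt hv), integral_const_mul,
    ← mul_assoc, hcancel, Function.comp_apply]

theorem stmt4 (B : ℕ) :
    Tendsto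
      (fun τ : ℝ =>
        Real.exp (τ ^ 2 / 2) * τ ^ ((3 : ℝ) - B) *
          ∫ x in Ioi (τ ^ 2),
            (Real.sqrt x - τ) * x ^ ((B : ℝ) / 2 - 1) * Real.exp (-x / 2))
      atTop (nhds 2) :=
  tendsto_exp_mul_rpow_mul_integral_Ioi_sq B
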